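/- Let G be a graph obtained from two disjoint graphs G₁ and G₂, each with at least two nodes, by identifying one node of G₁ with one node of G₂ into a cutnode v. Then every inclusionwise minimal proper cut of G is a proper cut of G₁ (extended by zeros) or a proper cut of G₂ (extended by zeros); consequently the minimum over proper cuts of G of a nonnegative cost c = (c₁, c₂) equals the minimum of the minimum proper cut value of (G₁, c₁) and that of (G₂, c₂). -/

import Mathlib

open Classical

noncomputable section

/-- The cut `δ(S)`: edges of `G` with exactly one endpoint in `S`. -/
def cutE {V : Type*} (G : SimpleGraph V) (S : Set V) : Set (Sym2 V) :=
  {e | e ∈ G.edgeSet ∧ ∃ u v, e = s(u, v) ∧ u ∈ S ∧ v ∉ S}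

/-- Characteristic vector of an edge set. -/
def chi {V : Type*} (C : Set (Sym2 V)) : Sym2 V → ℝ := fun e => if e ∈ C then 1 else 0

/-- Total cost of an edge set. -/
def cost {V : Type*} [Fintype V] [DecidableEq V] (c : Sym2 V → ℝ) (C : Set (Sym2 V)) : ℝ :=
  ∑ e ∈ Finset.univ.filter (· ∈ C), c e

/-!
Since `δ(S) = δ(Sᶜ)` we may take a shore `S` of a proper cut with `v ∉ S`. If `S` meets `A`,
then `S ∩ A ⊆ A \ {v}` and `δ(S ∩ A) ⊆ δ(S)`; otherwise `S ⊆ B \ {v}` already. So every proper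
cut of `G` contains a proper cut of `G₁` or of `G₂`: a minimal one equals it, and for `c ≥ 0` the
cheapest proper cut of `G` is found among those of `G₁` and `G₂`.
-/

lemma cost_nonneg {V : Type*} [Fintype V] [DecidableEq V] {c : Sym2 V → ℝ}
    (hc : ∀ e, 0 ≤ c e) (C : Set (Sym2 V)) : 0 ≤ cost c C :=
  Finset.sum_nonneg fun e _ => hc e

lemma cost_mono {V : Type*} [Fintype V] [DecidableEq V] {c : Sym2 V → ℝ}
    (hc : ∀ e, 0 ≤ c e) {C C' : Set (Sym2 V)} (h : C' ⊆ C) : cost c C' ≤ cost c C :=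
  Finset.sum_le_sum_of_subset_of_nonneg (Finset.monotone_filter_right _ fun e _ => @h e)
    fun e _ _ => hc e

lemma cutE_compl {V : Type*} (G : SimpleGraph V) (S : Set V) : cutE G Sᶜ = cutE G S := by
  ext e
  constructor
  · rintro ⟨he, u, w, rfl, hu, hw⟩
    exact ⟨he, w, u, Sym2.eq_swap, not_not.mp hw, hu⟩
  · rintro ⟨he, u, w, rfl, hu, hw⟩
    exact ⟨he, w, u, Sym2.eq_swap, hw, not_not.mpr hu⟩

/-- An edge leaving `T ∩ A` but not `T` lies in `B`, so its endpoint in `T ∩ A` would be `v`. -/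
lemma cutE_inter_subset {V : Type*} {G : SimpleGraph V} {A B : Set V} {v : V}
    (hinter : A ∩ B ⊆ {v}) (hsep : ∀ e ∈ G.edgeSet, (∀ x ∈ e, x ∈ A) ∨ (∀ x ∈ e, x ∈ B))
    {T : Set V} (hvT : v ∉ T) : cutE G (T ∩ A) ⊆ cutE G T := by
  rintro e ⟨he, u, w, rfl, ⟨huT, huA⟩, hw⟩
  refine ⟨he, u, w, rfl, huT, fun hwT => hw ⟨hwT, ?_⟩⟩
  rcases hsep _ he with h | h
  · exact h w (Sym2.mem_mk_right u w)
  · have : u = v := hinter ⟨huA, h u (Sym2.mem_mk_left u w)⟩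
    exact absurd (this ▸ huT) hvT

lemma ne_univ_of_subset_diff_singleton {V : Type*} {S X : Set V} {v : V}
    (h : S ⊆ X \ {v}) : S ≠ Set.univ :=
  fun hS => (h (hS ▸ Set.mem_univ v)).2 rfl

lemma exists_side_cutE_subset {V : Type*} {G : SimpleGraph V} {A B : Set V} {v : V}
    (hunion : A ∪ B = Set.univ) (hinter : A ∩ B = {v})
    (hsep : ∀ e ∈ G.edgeSet, (∀ x ∈ e, x ∈ A) ∨ (∀ x ∈ e, x ∈ B))
    {S : Set V} (hS : S.Nonempty) (hSU : S ≠ Set.univ) :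
    ∃ T : Set V, T.Nonempty ∧ (T ⊆ A \ {v} ∨ T ⊆ B \ {v}) ∧ cutE G T ⊆ cutE G S := by
  obtain ⟨T, hT, hvT, hcut⟩ : ∃ T : Set V, T.Nonempty ∧ v ∉ T ∧ cutE G T = cutE G S := by
    by_cases hv : v ∈ S
    · exact ⟨Sᶜ, Set.nonempty_compl.mpr hSU, not_not.mpr hv, cutE_compl G S⟩
    · exact ⟨S, hS, hv, rfl⟩
  rw [← hcut]
  by_cases hTA : (T ∩ A).Nonempty
  · refine ⟨T ∩ A, hTA, Or.inl fun x hx => ⟨hx.2, ?_⟩, cutE_inter_subset hinter.le hsep hvT⟩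
    rintro rfl
    exact hvT hx.1
  · refine ⟨T, hT, Or.inr fun x hx => ?_, le_rfl⟩
    have hxA : x ∉ A := fun hxA => hTA ⟨x, hx, hxA⟩
    have hvA : v ∈ A := (hinter.ge rfl).1
    have hxB : x ∈ B := (hunion.ge (Set.mem_univ x)).resolve_left hxA
    exact ⟨hxB, fun hxv => hxA (hxv ▸ hvA)⟩

lemma csInf_eq_min_of_forall_exists_le {α : Type*} [ConditionallyCompleteLinearOrder α]
    {s t u : Set α} (hu : BddBelow u) (hs : s.Nonempty) (ht : t.Nonempty)
    (hsu : s ⊆ u) (htu : t ⊆ u) (hle : ∀ x ∈ u, ∃ y ∈ s ∪ t, y ≤ x) :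
    sInf u = min (sInf s) (sInf t) := by
  rw [← csInf_union (hu.mono hsu) hs (hu.mono htu) ht]
  exact csInf_eq_csInf_of_forall_exists_le hle
    fun y hy => ⟨y, Set.union_subset hsu htu hy, le_rfl⟩

theorem stmt17 {V : Type*} [Fintype V] [DecidableEq V] (G : SimpleGraph V)
    (A B : Set V) (v : V) (hunion : A ∪ B = Set.univ) (hinter : A ∩ B = {v})
    (hA : 2 ≤ A.ncard) (hB : 2 ≤ B.ncard)
    (hsep : ∀ e ∈ G.edgeSet, (∀ x ∈ e, x ∈ A) ∨ (∀ x ∈ e, x ∈ B))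
    (c : Sym2 V → ℝ) (hc : ∀ e, 0 ≤ c e) :
    (∀ S : Set V, S.Nonempty → S ≠ Set.univ →
      (∀ S' : Set V, S'.Nonempty → S' ≠ Set.univ →
        cutE G S' ⊆ cutE G S → cutE G S' = cutE G S) →
      (∃ S', S'.Nonempty ∧ S' ⊆ A \ {v} ∧ cutE G S = cutE G S') ∨
      (∃ S', S'.Nonempty ∧ S' ⊆ B \ {v} ∧ cutE G S = cutE G S')) ∧
    sInf {r | ∃ S : Set V, S.Nonempty ∧ S ≠ Set.univ ∧ r = cost c (cutE G S)} =
      min (sInf {r | ∃ S : Set V, S.Nonempty ∧ S ⊆ A \ {v} ∧ r = cost c (cutE G S)})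
          (sInf {r | ∃ S : Set V, S.Nonempty ∧ S ⊆ B \ {v} ∧ r = cost c (cutE G S)}) := by
  refine ⟨fun S hS hSU hmin => ?_, ?_⟩
  · obtain ⟨T, hT, hside | hside, hsub⟩ := exists_side_cutE_subset hunion hinter hsep hS hSU
    · exact .inl ⟨T, hT, hside, (hmin T hT (ne_univ_of_subset_diff_singleton hside) hsub).symm⟩
    · exact .inr ⟨T, hT, hside, (hmin T hT (ne_univ_of_subset_diff_singleton hside) hsub).symm⟩
  have side_nonempty {X : Set V} (hX : 2 ≤ X.ncard) : (X \ {v}).Nonempty :=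
    let ⟨x, hx, hxv⟩ := Set.exists_ne_of_one_lt_ncard hX v
    ⟨x, hx, hxv⟩
  refine csInf_eq_min_of_forall_exists_le ⟨0, ?_⟩ ⟨_, _, side_nonempty hA, subset_rfl, rfl⟩
    ⟨_, _, side_nonempty hB, subset_rfl, rfl⟩ ?_ ?_ ?_
  · rintro r ⟨S, -, -, rfl⟩
    exact cost_nonneg hc _
  · rintro r ⟨S, hS, hside, rfl⟩
    exact ⟨S, hS, ne_univ_of_subset_diff_singleton hside, rfl⟩
  · rintro r ⟨S, hS, hside, rfl⟩
    exact ⟨S, hS, ne_univ_of_subset_diff_singleton hside, rfl⟩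
  · rintro r ⟨S, hS, hSU, rfl⟩
    obtain ⟨T, hT, hside | hside, hsub⟩ := exists_side_cutE_subset hunion hinter hsep hS hSU
    · exact ⟨_, .inl ⟨T, hT, hside, rfl⟩, cost_mono hc hsub⟩
    · exact ⟨_, .inr ⟨T, hT, hside, rfl⟩, cost_mono hc hsub⟩
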